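/- arXiv:1204.6699 — 6 statements merged into one kernel-verified Lean document; each statement's English description precedes it below -/
import Mathlib

section
/- Let P be a finite nonempty set of points in ℝ^d with mean m and variance δ² = (1/|P|)∑_{p∈P} ‖p − m‖². Let P₁ ⊆ P be a nonempty subset with |P₁| = α|P| for some 0 < α ≤ 1, P₁ ≠ P, and let m₁ be the mean of P₁. Then ‖m₁ − m‖ ≤ √((1−α)/α)·δ. -/
/-!
Put `v = ∑_{p ∈ P₁} (p - m)`. The deviations from `m` sum to zero over `P`, so over the complement
`P₂ = P \ P₁` they sum to `-v`. Cauchy–Schwarz on each part gives `‖v‖² ≤ n₁ S₁` and `‖v‖² ≤ n₂ S₂`,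
where `Sᵢ` is the sum of `‖p - m‖²` over `Pᵢ`; weighting these by `n₂` and `n₁` and adding yields
`n ‖v‖² ≤ n₁ n₂ (S₁ + S₂) = n₁ n₂ n δ²`. Since `m₁ - m = v / n₁`, this is
`‖m₁ - m‖² ≤ (n₂ / n₁) δ² = ((1 - α) / α) δ²`.
-/

open Finset

section Deviation

variable {ι E : Type*} [SeminormedAddCommGroup E]

theorem norm_sum_sq_le_card_mul_sum_norm_sq (s : Finset ι) (f : ι → E) :
    ‖∑ i ∈ s, f i‖ ^ 2 ≤ #s * ∑ i ∈ s, ‖f i‖ ^ 2 :=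
  (pow_le_pow_left₀ (norm_nonneg _) (norm_sum_le _ _) 2).trans sq_sum_le_card_mul_sum_sq

theorem card_mul_norm_sum_sq_le_of_sum_eq_zero [DecidableEq ι] {s t : Finset ι} (hts : t ⊆ s)
    {f : ι → E} (hf : ∑ i ∈ s, f i = 0) :
    #s * ‖∑ i ∈ t, f i‖ ^ 2 ≤ #t * #(s \ t) * ∑ i ∈ s, ‖f i‖ ^ 2 := by
  have hin := norm_sum_sq_le_card_mul_sum_norm_sq t f
  have hout := norm_sum_sq_le_card_mul_sum_norm_sq (s \ t) f
  rw [sum_sdiff_eq_sub hts, hf, zero_sub, norm_neg] at hout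
  have hcard : (#s : ℝ) = #(s \ t) + #t := by
    exact_mod_cast (card_sdiff_add_card_eq_card hts).symm
  rw [hcard, ← sum_sdiff hts (f := fun i => ‖f i‖ ^ 2)]
  linear_combination (#(s \ t) : ℝ) * hin + (#t : ℝ) * hout

end Deviation

section Mean

variable {𝕜 E : Type*} [Field 𝕜] [CharZero 𝕜] [AddCommGroup E] [Module 𝕜 E]

theorem sum_sub_mean_eq_zero (s : Finset E) :
    ∑ p ∈ s, (p - (#s : 𝕜)⁻¹ • ∑ q ∈ s, q) = 0 := by
  rcases s.eq_empty_or_nonempty with rfl | hs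
  · simp
  rw [sum_sub_distrib, sum_const, ← Nat.cast_smul_eq_nsmul 𝕜,
    smul_inv_smul₀ (by simpa using hs.ne_empty), sub_self]

theorem mean_sub_eq_smul_sum_sub {t : Finset E} (ht : t.Nonempty) (m : E) :
    (#t : 𝕜)⁻¹ • ∑ p ∈ t, p - m = (#t : 𝕜)⁻¹ • ∑ p ∈ t, (p - m) := by
  rw [sum_sub_distrib, sum_const, smul_sub, ← Nat.cast_smul_eq_nsmul 𝕜,
    inv_smul_smul₀ (by simpa using ht.ne_empty)]

end Mean

theorem sq_norm_mean_sub_mean_le {E : Type*} [DecidableEq E] [SeminormedAddCommGroup E]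
    [NormedSpace ℝ E] {s t : Finset E} (hts : t ⊆ s) (ht : t.Nonempty) :
    ‖(#t : ℝ)⁻¹ • ∑ p ∈ t, p - (#s : ℝ)⁻¹ • ∑ p ∈ s, p‖ ^ 2 ≤
      #(s \ t) / #t * ((#s : ℝ)⁻¹ * ∑ p ∈ s, ‖p - (#s : ℝ)⁻¹ • ∑ q ∈ s, q‖ ^ 2) := by
  set m := (#s : ℝ)⁻¹ • ∑ q ∈ s, q
  have key := card_mul_norm_sum_sq_le_of_sum_eq_zero hts (sum_sub_mean_eq_zero (𝕜 := ℝ) s)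
  have ht₀ : (0 : ℝ) < #t := by exact_mod_cast ht.card_pos
  have hs₀ : (0 : ℝ) < #s := by exact_mod_cast (ht.mono hts).card_pos
  rw [mean_sub_eq_smul_sum_sub ht, norm_smul, mul_pow, norm_inv, Real.norm_natCast,
    div_mul_eq_mul_div, le_div_iff₀ ht₀]
  field_simp
  linarith

theorem stmt_2_general {d : ℕ} (P P₁ : Finset (EuclideanSpace ℝ (Fin d)))
    (hP₁ : P₁.Nonempty) (hsub : P₁ ⊆ P)
    (m m₁ : EuclideanSpace ℝ (Fin d))
    (hm : m = (P.card : ℝ)⁻¹ • ∑ p ∈ P, p)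
    (hm₁ : m₁ = (P₁.card : ℝ)⁻¹ • ∑ p ∈ P₁, p)
    (α : ℝ) (hα : α = (P₁.card : ℝ) / (P.card : ℝ))
    (δ : ℝ) (hδ0 : 0 ≤ δ)
    (hδ : δ ^ 2 = (P.card : ℝ)⁻¹ * ∑ p ∈ P, ‖p - m‖ ^ 2) :
    ‖m₁ - m‖ ≤ Real.sqrt ((1 - α) / α) * δ := by
  classical
  have hratio : (1 - α) / α = #(P \ P₁) / #P₁ := by
    have hcard : (#P : ℝ) = #(P \ P₁) + #P₁ := by
      exact_mod_cast (card_sdiff_add_card_eq_card hsub).symm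
    have hP₁₀ : (0 : ℝ) < #P₁ := by exact_mod_cast hP₁.card_pos
    rw [hα, hcard]
    field_simp
    ring
  have hsq : ‖m₁ - m‖ ^ 2 ≤ (1 - α) / α * δ ^ 2 := by
    subst hm hm₁
    rw [hratio, hδ]
    exact sq_norm_mean_sub_mean_le hsub hP₁
  rw [← Real.sqrt_sq hδ0, ← Real.sqrt_mul' _ (sq_nonneg δ)]
  exact Real.le_sqrt_of_sq_le hsq

theorem stmt_2 {d : ℕ} (P P₁ : Finset (EuclideanSpace ℝ (Fin d)))
    (hP : P.Nonempty) (hP₁ : P₁.Nonempty) (hsub : P₁ ⊆ P) (hne : P₁ ≠ P)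
    (m m₁ : EuclideanSpace ℝ (Fin d))
    (hm : m = (P.card : ℝ)⁻¹ • ∑ p ∈ P, p)
    (hm₁ : m₁ = (P₁.card : ℝ)⁻¹ • ∑ p ∈ P₁, p)
    (α : ℝ) (hα : α = (P₁.card : ℝ) / (P.card : ℝ)) (hα0 : 0 < α) (hα1 : α ≤ 1)
    (δ : ℝ) (hδ0 : 0 ≤ δ)
    (hδ : δ ^ 2 = (P.card : ℝ)⁻¹ * ∑ p ∈ P, ‖p - m‖ ^ 2) :
    ‖m₁ - m‖ ≤ Real.sqrt ((1 - α) / α) * δ :=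
  stmt_2_general P P₁ hP₁ hsub m m₁ hm hm₁ α hα δ hδ0 hδ
end

section
/- Let P be a finite set with mean o and variance δ², partitioned into disjoint nonempty subsets P₁,…,P_j such that |P_l|/|P| ≥ ε/(4j) for each l, where 0 < ε ≤ 1. Then for each l, ‖o_l − o‖ ≤ 2√(j/ε)·δ, where o_l is the mean of P_l; consequently ‖o_{l} − o_{l'}‖ ≤ 4√(j/ε)·δ for all l, l'. -/
/-!
The centroid of `Q ⊆ P` is the average of the points of `Q`, so by Cauchy–Schwarz (Jensen for
`‖·‖²`) its squared distance to `o` is at most the mean of `‖p - o‖²` over `Q`. Enlarging the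
sum from `Q` to `P` costs the factor `|P| / |Q| ≤ 4j/ε`, which gives `‖o_l - o‖² ≤ (4j/ε) δ²`;
the bound between two centroids is then the triangle inequality through `o`.
-/

open Finset

section Average

variable {ι E : Type*} [SeminormedAddCommGroup E] [NormedSpace ℝ E]

theorem sq_norm_average_sub_le {s : Finset ι} (hs : s.Nonempty) (f : ι → E) (x : E) :
    ‖(#s : ℝ)⁻¹ • ∑ i ∈ s, f i - x‖ ^ 2 ≤ (#s : ℝ)⁻¹ * ∑ i ∈ s, ‖f i - x‖ ^ 2 := by
  have hcard : (#s : ℝ) ≠ 0 := by exact_mod_cast hs.card_pos.ne'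
  have hcenter : (#s : ℝ)⁻¹ • ∑ i ∈ s, f i - x = (#s : ℝ)⁻¹ • ∑ i ∈ s, (f i - x) := by
    rw [sum_sub_distrib, smul_sub, sum_const, ← Nat.cast_smul_eq_nsmul ℝ, smul_smul,
      inv_mul_cancel₀ hcard, one_smul]
  calc ‖(#s : ℝ)⁻¹ • ∑ i ∈ s, f i - x‖ ^ 2
      ≤ ((∑ i ∈ s, ‖f i - x‖) / #s) ^ 2 := by
        rw [hcenter, norm_smul, norm_inv, RCLike.norm_natCast, inv_mul_eq_div]
        gcongr
        exact norm_sum_le _ _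
    _ ≤ (∑ i ∈ s, ‖f i - x‖ ^ 2) / #s := sum_div_card_sq_le_sum_sq_div_card
    _ = (#s : ℝ)⁻¹ * ∑ i ∈ s, ‖f i - x‖ ^ 2 := inv_mul_eq_div _ _ |>.symm

theorem sq_norm_average_sub_le_of_subset {s t : Finset ι} (hst : s ⊆ t) (hs : s.Nonempty)
    {c : ℝ} (hc : 0 < c) (hcard : c * #t ≤ #s) (f : ι → E) (x : E) :
    ‖(#s : ℝ)⁻¹ • ∑ i ∈ s, f i - x‖ ^ 2 ≤ c⁻¹ * ((#t : ℝ)⁻¹ * ∑ i ∈ t, ‖f i - x‖ ^ 2) := by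
  have hs_pos : (0 : ℝ) < #s := by exact_mod_cast hs.card_pos
  have ht_pos : (0 : ℝ) < #t := by exact_mod_cast (hs.mono hst).card_pos
  have hinv : (#s : ℝ)⁻¹ ≤ c⁻¹ * (#t : ℝ)⁻¹ := by
    rw [← mul_inv]
    exact inv_anti₀ (by positivity) hcard
  calc ‖(#s : ℝ)⁻¹ • ∑ i ∈ s, f i - x‖ ^ 2
      ≤ (#s : ℝ)⁻¹ * ∑ i ∈ s, ‖f i - x‖ ^ 2 := sq_norm_average_sub_le hs f x
    _ ≤ (#s : ℝ)⁻¹ * ∑ i ∈ t, ‖f i - x‖ ^ 2 := by gcongr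
    _ ≤ c⁻¹ * (#t : ℝ)⁻¹ * ∑ i ∈ t, ‖f i - x‖ ^ 2 := by gcongr
    _ = c⁻¹ * ((#t : ℝ)⁻¹ * ∑ i ∈ t, ‖f i - x‖ ^ 2) := mul_assoc _ _ _

end Average

theorem stmt_6_general {d j : ℕ} [DecidableEq (EuclideanSpace ℝ (Fin d))] (P : Finset (EuclideanSpace ℝ (Fin d)))
    (Q : Fin j → Finset (EuclideanSpace ℝ (Fin d)))
    (hne : ∀ l, (Q l).Nonempty)
    (hP : P = Finset.univ.biUnion Q)
    (ε : ℝ) (hε0 : 0 < ε)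
    (hfrac : ∀ l, ((Q l).card : ℝ) ≥ (ε / (4 * j)) * (P.card : ℝ))
    (o : EuclideanSpace ℝ (Fin d)) (oL : Fin j → EuclideanSpace ℝ (Fin d))
    (hoL : ∀ l, oL l = ((Q l).card : ℝ)⁻¹ • ∑ p ∈ Q l, p)
    (δ : ℝ) (hδ0 : 0 ≤ δ)
    (hδ : δ ^ 2 = (P.card : ℝ)⁻¹ * ∑ p ∈ P, ‖p - o‖ ^ 2) :
    (∀ l, ‖oL l - o‖ ≤ 2 * Real.sqrt ((j : ℝ) / ε) * δ) ∧
      (∀ l l', ‖oL l - oL l'‖ ≤ 4 * Real.sqrt ((j : ℝ) / ε) * δ) := by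
  have hcentroid : ∀ l, ‖oL l - o‖ ≤ 2 * Real.sqrt ((j : ℝ) / ε) * δ := by
    intro l
    have hj : (0 : ℝ) < j := by exact_mod_cast Fin.pos l
    have hsub : Q l ⊆ P := hP ▸ subset_biUnion_of_mem Q (mem_univ l)
    have hsq := sq_norm_average_sub_le_of_subset hsub (hne l) (by positivity) (hfrac l)
      (fun p ↦ p) o
    rw [← hoL l, ← hδ, inv_div] at hsq
    refine (pow_le_pow_iff_left₀ (norm_nonneg _) (by positivity) two_ne_zero).mp ?_
    rw [mul_pow, mul_pow, Real.sq_sqrt (by positivity)]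
    exact hsq.trans_eq (by ring)
  refine ⟨hcentroid, fun l l' ↦ ?_⟩
  calc ‖oL l - oL l'‖ ≤ ‖oL l - o‖ + ‖o - oL l'‖ := norm_sub_le_norm_sub_add_norm_sub _ _ _
    _ = ‖oL l - o‖ + ‖oL l' - o‖ := by rw [norm_sub_rev o]
    _ ≤ 4 * Real.sqrt ((j : ℝ) / ε) * δ := by linarith [hcentroid l, hcentroid l']

theorem stmt_6 {d j : ℕ} [DecidableEq (EuclideanSpace ℝ (Fin d))] (P : Finset (EuclideanSpace ℝ (Fin d)))
    (Q : Fin j → Finset (EuclideanSpace ℝ (Fin d)))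
    (hne : ∀ l, (Q l).Nonempty)
    (hdisj : ∀ l₁ l₂, l₁ ≠ l₂ → Disjoint (Q l₁) (Q l₂))
    (hP : P = Finset.univ.biUnion Q)
    (hQP : ∀ l, Q l ≠ P)
    (ε : ℝ) (hε0 : 0 < ε) (hε1 : ε ≤ 1)
    (hfrac : ∀ l, ((Q l).card : ℝ) ≥ (ε / (4 * j)) * (P.card : ℝ))
    (o : EuclideanSpace ℝ (Fin d)) (oL : Fin j → EuclideanSpace ℝ (Fin d))
    (ho : o = (P.card : ℝ)⁻¹ • ∑ p ∈ P, p)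
    (hoL : ∀ l, oL l = ((Q l).card : ℝ)⁻¹ • ∑ p ∈ Q l, p)
    (δ : ℝ) (hδ0 : 0 ≤ δ)
    (hδ : δ ^ 2 = (P.card : ℝ)⁻¹ * ∑ p ∈ P, ‖p - o‖ ^ 2) :
    (∀ l, ‖oL l - o‖ ≤ 2 * Real.sqrt ((j : ℝ) / ε) * δ) ∧
      (∀ l l', ‖oL l - oL l'‖ ≤ 4 * Real.sqrt ((j : ℝ) / ε) * δ) :=
  stmt_6_general P Q hne hP ε hε0 hfrac o oL hoL δ hδ0 hδ
end

section
/- Let P be a finite nonempty set of points in ℝ^d and P₁ ⊆ P with |P₁| = α|P|, 0 < α ≤ 1. Let m_opt minimize q ↦ ∑_{p∈P}‖p−q‖ over ℝ^d, let m be a (1+ε)-approximate median of P (i.e., ∑_{p∈P}‖p−m‖ ≤ (1+ε)∑_{p∈P}‖p−m_opt‖), and let m₁ minimize q ↦ ∑_{p∈P₁}‖p−q‖. Then ‖m₁ − m‖ ≤ ((2+ε)/α)·μ, where μ = (1/|P|)∑_{p∈P}‖p − m_opt‖. -/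
/-!
Averaging the triangle inequality `‖m₁ - m‖ ≤ ‖p - m₁‖ + ‖p - m‖` over `p ∈ P₁` bounds
`|P₁| ‖m₁ - m‖` by the cost of `m₁` on `P₁` plus the cost of `m` on `P₁`. The first is at most
the cost of `m_opt` on `P₁`, since `m₁` is a median of `P₁`; and both costs only grow when `P₁`
is enlarged to `P`, giving `|P₁| ‖m₁ - m‖ ≤ (1 + (1 + ε)) ∑_{p ∈ P} ‖p - m_opt‖`.
-/

open Finset

section Median

variable {E : Type*} [SeminormedAddCommGroup E]

lemma card_mul_norm_sub_le_sum_add_sum (s : Finset E) (a b : E) :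
    (#s : ℝ) * ‖a - b‖ ≤ ∑ p ∈ s, ‖p - a‖ + ∑ p ∈ s, ‖p - b‖ := by
  rw [← sum_add_distrib, ← nsmul_eq_mul]
  refine card_nsmul_le_sum s _ _ fun p _ => ?_
  rw [norm_sub_rev p a]
  exact norm_sub_le_norm_sub_add_norm_sub a p b

lemma sum_norm_sub_le_of_subset {s t : Finset E} (hst : s ⊆ t) (q : E) :
    ∑ p ∈ s, ‖p - q‖ ≤ ∑ p ∈ t, ‖p - q‖ :=
  sum_le_sum_of_subset_of_nonneg hst fun _ _ _ => norm_nonneg _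

lemma card_mul_norm_sub_le_of_median_subset {s t : Finset E} (hst : s ⊆ t) {m₁ : E}
    (hm₁ : ∀ q, ∑ p ∈ s, ‖p - m₁‖ ≤ ∑ p ∈ s, ‖p - q‖) (c m : E) :
    (#s : ℝ) * ‖m₁ - m‖ ≤ ∑ p ∈ t, ‖p - c‖ + ∑ p ∈ t, ‖p - m‖ :=
  calc (#s : ℝ) * ‖m₁ - m‖ ≤ ∑ p ∈ s, ‖p - m₁‖ + ∑ p ∈ s, ‖p - m‖ :=
        card_mul_norm_sub_le_sum_add_sum s m₁ m
    _ ≤ ∑ p ∈ t, ‖p - c‖ + ∑ p ∈ t, ‖p - m‖ :=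
        add_le_add ((hm₁ c).trans (sum_norm_sub_le_of_subset hst c))
          (sum_norm_sub_le_of_subset hst m)

end Median

theorem stmt_8_general {d : ℕ} (P P₁ : Finset (EuclideanSpace ℝ (Fin d)))
    (hsub : P₁ ⊆ P)
    (α : ℝ) (hα : α = (P₁.card : ℝ) / (P.card : ℝ)) (hα0 : 0 < α)
    (ε : ℝ)
    (mopt m m₁ : EuclideanSpace ℝ (Fin d))
    (hm : ∑ p ∈ P, ‖p - m‖ ≤ (1 + ε) * ∑ p ∈ P, ‖p - mopt‖)
    (hm₁ : ∀ q, ∑ p ∈ P₁, ‖p - m₁‖ ≤ ∑ p ∈ P₁, ‖p - q‖)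
    (μ : ℝ) (hμ : μ = (P.card : ℝ)⁻¹ * ∑ p ∈ P, ‖p - mopt‖) :
    ‖m₁ - m‖ ≤ (2 + ε) / α * μ := by
  have hP : (0 : ℝ) < #P := by
    refine (Nat.cast_nonneg _).lt_of_ne' fun h => ?_
    simp [hα, h] at hα0
  have hP₁ : (0 : ℝ) < #P₁ := (div_pos_iff_of_pos_right hP).mp (hα ▸ hα0)
  have hspread := card_mul_norm_sub_le_of_median_subset hsub hm₁ mopt m
  have hrhs : (2 + ε) / α * μ = (2 + ε) * (∑ p ∈ P, ‖p - mopt‖) / #P₁ := by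
    rw [hα, hμ]
    field_simp
  rw [hrhs, le_div_iff₀ hP₁]
  linarith

theorem stmt_8 {d : ℕ} (P P₁ : Finset (EuclideanSpace ℝ (Fin d)))
    (hP : P.Nonempty) (hP₁ : P₁.Nonempty) (hsub : P₁ ⊆ P)
    (α : ℝ) (hα : α = (P₁.card : ℝ) / (P.card : ℝ)) (hα0 : 0 < α) (hα1 : α ≤ 1)
    (ε : ℝ) (hε : 0 ≤ ε)
    (mopt m m₁ : EuclideanSpace ℝ (Fin d))
    (hmopt : ∀ q, ∑ p ∈ P, ‖p - mopt‖ ≤ ∑ p ∈ P, ‖p - q‖)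
    (hm : ∑ p ∈ P, ‖p - m‖ ≤ (1 + ε) * ∑ p ∈ P, ‖p - mopt‖)
    (hm₁ : ∀ q, ∑ p ∈ P₁, ‖p - m₁‖ ≤ ∑ p ∈ P₁, ‖p - q‖)
    (μ : ℝ) (hμ : μ = (P.card : ℝ)⁻¹ * ∑ p ∈ P, ‖p - mopt‖) :
    ‖m₁ - m‖ ≤ (2 + ε) / α * μ :=
  stmt_8_general P P₁ hsub α hα hα0 ε mopt m m₁ hm hm₁ μ hμ
end

section
/- Let P be a finite nonempty set in ℝ^d partitioned into disjoint nonempty subsets P₁,…,P_j. Let o be an optimal median of P (minimizing the sum of distances), o_l an optimal median of P_l, and μ = (1/|P|)∑_{p∈P}‖p−o‖. Then there exists an index i₀ with ‖o − o_{i₀}‖ ≤ 4μ. -/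
/-!
Comparing the median `oL l` of a cluster with `o` and using the triangle inequality
`‖o - oL l‖ ≤ ‖p - o‖ + ‖p - oL l‖` for `p ∈ Q l` gives
`#(Q l) * ‖o - oL l‖ ≤ 2 * ∑ p ∈ Q l, ‖p - o‖`. Summing over all clusters, the average over
`p ∈ P` of `‖o - oL l(p)‖`, where `l(p)` is the cluster of `p`, is at most `2μ`, so some cluster
meets the bound `2μ ≤ 4μ`.
-/

open Finset Function

section

variable {E : Type*} [SeminormedAddCommGroup E]

theorem card_mul_norm_sub_le_two_mul_sum (S : Finset E) {o m : E}
    (hm : ∑ p ∈ S, ‖p - m‖ ≤ ∑ p ∈ S, ‖p - o‖) :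
    #S * ‖o - m‖ ≤ 2 * ∑ p ∈ S, ‖p - o‖ :=
  calc #S * ‖o - m‖ = ∑ _p ∈ S, ‖o - m‖ := by rw [sum_const, nsmul_eq_mul]
    _ ≤ ∑ p ∈ S, (‖p - o‖ + ‖p - m‖) := sum_le_sum fun p _ => by
        simpa only [dist_eq_norm] using dist_triangle_left o m p
    _ ≤ 2 * ∑ p ∈ S, ‖p - o‖ := by rw [sum_add_distrib]; linarith

theorem exists_card_mul_norm_sub_le_two_mul_sum {ι : Type*} [Fintype ι] [DecidableEq E]
    {Q : ι → Finset E} (hQ : (univ.biUnion Q).Nonempty) (hdisj : Pairwise (Disjoint on Q))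
    (o : E) {m : ι → E} (hm : ∀ l, ∑ p ∈ Q l, ‖p - m l‖ ≤ ∑ p ∈ Q l, ‖p - o‖) :
    ∃ l, #(univ.biUnion Q) * ‖o - m l‖ ≤ 2 * ∑ p ∈ univ.biUnion Q, ‖p - o‖ := by
  have hdisj' : ((univ : Finset ι) : Set ι).PairwiseDisjoint Q := fun a _ b _ hab => hdisj hab
  set σ := univ.sigma Q
  have hσ : σ.Nonempty := by
    obtain ⟨p, hp⟩ := hQ
    obtain ⟨l, -, hl⟩ := mem_biUnion.mp hp
    exact ⟨⟨l, p⟩, mem_sigma.mpr ⟨mem_univ l, hl⟩⟩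
  have hcard : #(univ.biUnion Q) = #σ := by rw [card_biUnion hdisj', card_sigma]
  have hsum : ∑ x ∈ σ, ‖o - m x.1‖ ≤ 2 * ∑ p ∈ univ.biUnion Q, ‖p - o‖ :=
    calc ∑ x ∈ σ, ‖o - m x.1‖ = ∑ l, #(Q l) * ‖o - m l‖ := by
          simp only [σ, sum_sigma, sum_const, nsmul_eq_mul]
      _ ≤ ∑ l, 2 * ∑ p ∈ Q l, ‖p - o‖ :=
          sum_le_sum fun l _ => card_mul_norm_sub_le_two_mul_sum (Q l) (hm l)
      _ = 2 * ∑ p ∈ univ.biUnion Q, ‖p - o‖ := by rw [← mul_sum, sum_biUnion hdisj']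
  have hmean : ∑ x ∈ σ, #σ * ‖o - m x.1‖ ≤ ∑ _x ∈ σ, 2 * ∑ p ∈ univ.biUnion Q, ‖p - o‖ := by
    rw [← mul_sum, sum_const, nsmul_eq_mul]
    gcongr
  obtain ⟨⟨l, p⟩, -, hl⟩ := exists_le_of_sum_le hσ hmean
  exact ⟨l, hcard ▸ hl⟩

end

theorem stmt_9_general {d j : ℕ} [DecidableEq (EuclideanSpace ℝ (Fin d))] (P : Finset (EuclideanSpace ℝ (Fin d))) (hP : P.Nonempty)
    (Q : Fin j → Finset (EuclideanSpace ℝ (Fin d)))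
    (hdisj : ∀ l₁ l₂, l₁ ≠ l₂ → Disjoint (Q l₁) (Q l₂))
    (hPQ : P = Finset.univ.biUnion Q)
    (o : EuclideanSpace ℝ (Fin d)) (oL : Fin j → EuclideanSpace ℝ (Fin d))
    (hoL : ∀ l q, ∑ p ∈ Q l, ‖p - oL l‖ ≤ ∑ p ∈ Q l, ‖p - q‖)
    (μ : ℝ) (hμ : μ = (P.card : ℝ)⁻¹ * ∑ p ∈ P, ‖p - o‖) :
    ∃ i₀ : Fin j, ‖o - oL i₀‖ ≤ 4 * μ := by
  subst hPQ
  obtain ⟨l, hl⟩ := exists_card_mul_norm_sub_le_two_mul_sum hP hdisj o (fun l => hoL l o)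
  have hcard : (0 : ℝ) < #(univ.biUnion Q) := by exact_mod_cast hP.card_pos
  have hμ0 : 0 ≤ μ := hμ ▸ mul_nonneg (by positivity) (sum_nonneg fun p _ => norm_nonneg _)
  have hclose : ‖o - oL l‖ ≤ 2 * μ := by
    rw [← mul_le_mul_iff_of_pos_left hcard]
    calc _ ≤ 2 * ∑ p ∈ univ.biUnion Q, ‖p - o‖ := hl
      _ = #(univ.biUnion Q) * (2 * μ) := by rw [hμ]; field_simp
  exact ⟨l, by linarith⟩

theorem stmt_9 {d j : ℕ} [DecidableEq (EuclideanSpace ℝ (Fin d))] (P : Finset (EuclideanSpace ℝ (Fin d))) (hP : P.Nonempty)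
    (Q : Fin j → Finset (EuclideanSpace ℝ (Fin d)))
    (hne : ∀ l, (Q l).Nonempty)
    (hdisj : ∀ l₁ l₂, l₁ ≠ l₂ → Disjoint (Q l₁) (Q l₂))
    (hPQ : P = Finset.univ.biUnion Q)
    (o : EuclideanSpace ℝ (Fin d)) (oL : Fin j → EuclideanSpace ℝ (Fin d))
    (ho : ∀ q, ∑ p ∈ P, ‖p - o‖ ≤ ∑ p ∈ P, ‖p - q‖)
    (hoL : ∀ l q, ∑ p ∈ Q l, ‖p - oL l‖ ≤ ∑ p ∈ Q l, ‖p - q‖)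
    (μ : ℝ) (hμ : μ = (P.card : ℝ)⁻¹ * ∑ p ∈ P, ‖p - o‖) :
    ∃ i₀ : Fin j, ‖o - oL i₀‖ ≤ 4 * μ :=
  stmt_9_general P hP Q hdisj hPQ o oL hoL μ hμ
end

section
/- Let {Opt_1,…,Opt_k} be the optimal chromatic k-means clusters of a point set G with optimal mean points m_i, and let {S_1,…,S_k} with centers c_j be a c-approximate (ordinary) k-means solution on the same points. Suppose for each i an index j_i is chosen with |Opt_i ∩ S_{j_i}| ≥ |Opt_i|/k. Then ∑_{i=1}^k ∑_{p∈Opt_i} ‖p − c_{j_i}‖² ≤ (2ck² + 2k − 1)·∑_{i=1}^k ∑_{p∈Opt_i} ‖p − m_i‖². -/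
/-!
Fix a chromatic cluster `Opt_i`, let `B = Opt_i ∩ S_{j_i}` and let `μ` be the centroid of `B`.
By the parallel axis theorem the cost of `Opt_i` about `c = c_{j_i}` is its cost about `m_i` plus
`|Opt_i| ‖m_i - c‖²`, and `‖m_i - c‖² ≤ 2 ‖m_i - μ‖² + 2 ‖μ - c‖²`. Since `B` carries at least a
`1/k` share of `Opt_i`, its centroid is close to `m_i`: `|Opt_i| ‖μ - m_i‖² ≤ (k - 1) cost(Opt_i)`.
On the other side `|Opt_i| ‖μ - c‖² ≤ k |B| ‖μ - c‖² ≤ k cost(B, c) ≤ k cost(S_{j_i})`. Summing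
over the `k` clusters, and bounding each `cost(S_{j_i})` by the total cost of `{S_j}`, which is at
most `capp · OPT`, gives `(2k - 1) OPT + 2k² · capp · OPT`.
-/

open Finset

section Centroid

variable {E : Type*} [NormedAddCommGroup E]

lemma sq_norm_sum_le_card_mul_sum_sq_norm {ι : Type*} (A : Finset ι) (v : ι → E) :
    ‖∑ i ∈ A, v i‖ ^ 2 ≤ #A * ∑ i ∈ A, ‖v i‖ ^ 2 :=
  (pow_le_pow_left₀ (norm_nonneg _) (norm_sum_le _ _) 2).trans (sq_sum_le_card_mul_sum_sq ..)

lemma norm_sub_sq_le_two_mul_add (a b c : E) :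
    ‖a - c‖ ^ 2 ≤ 2 * ‖a - b‖ ^ 2 + 2 * ‖b - c‖ ^ 2 := by
  have := (pow_le_pow_left₀ (norm_nonneg _) (norm_sub_le_norm_sub_add_norm_sub a b c) 2).trans
    add_sq_le
  linarith

variable [InnerProductSpace ℝ E]

lemma card_smul_inv_card_smul_sum (A : Finset E) :
    (#A : ℝ) • ((#A : ℝ)⁻¹ • ∑ p ∈ A, p) = ∑ p ∈ A, p := by
  obtain rfl | hA := A.eq_empty_or_nonempty
  · simp
  · exact smul_inv_smul₀ (by exact_mod_cast hA.card_pos.ne') _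

lemma sum_sub_eq_card_smul_sub {A : Finset E} {m : E}
    (hm : (#A : ℝ) • m = ∑ p ∈ A, p) (x : E) : ∑ p ∈ A, (p - x) = (#A : ℝ) • (m - x) := by
  rw [sum_sub_distrib, sum_const, ← Nat.cast_smul_eq_nsmul ℝ, smul_sub, hm]

/-- Huygens' parallel axis theorem. -/
lemma sum_norm_sub_sq_eq_of_card_smul_eq_sum {A : Finset E} {m : E}
    (hm : (#A : ℝ) • m = ∑ p ∈ A, p) (x : E) :
    ∑ p ∈ A, ‖p - x‖ ^ 2 = ∑ p ∈ A, ‖p - m‖ ^ 2 + #A * ‖m - x‖ ^ 2 := by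
  have hsplit : ∑ p ∈ A, ‖p - x‖ ^ 2 =
      ∑ p ∈ A, (‖p - m‖ ^ 2 + 2 * inner ℝ (p - m) (m - x) + ‖m - x‖ ^ 2) :=
    sum_congr rfl fun p _ => by rw [← norm_add_sq_real, sub_add_sub_cancel]
  rw [hsplit, sum_add_distrib, sum_add_distrib, ← mul_sum, ← sum_inner,
    sum_sub_eq_card_smul_sub hm, sub_self, smul_zero, inner_zero_left, mul_zero, add_zero,
    sum_const, nsmul_eq_mul]

lemma card_mul_norm_sub_sq_le_sum {A : Finset E} {m : E}
    (hm : (#A : ℝ) • m = ∑ p ∈ A, p) (x : E) :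
    #A * ‖m - x‖ ^ 2 ≤ ∑ p ∈ A, ‖p - x‖ ^ 2 := by
  rw [sum_norm_sub_sq_eq_of_card_smul_eq_sum hm x]
  exact le_add_of_nonneg_left (by positivity)

lemma card_mul_card_mul_norm_sub_sq_le [DecidableEq E] {A B : Finset E} {m μ : E} (hBA : B ⊆ A)
    (hm : (#A : ℝ) • m = ∑ p ∈ A, p) (hμ : (#B : ℝ) • μ = ∑ p ∈ B, p) :
    #B * (#A * ‖μ - m‖ ^ 2) ≤ (#A - #B) * ∑ p ∈ A, ‖p - m‖ ^ 2 := by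
  have hcard : (#(A \ B) : ℝ) = #A - #B := by
    rw [card_sdiff_of_subset hBA, Nat.cast_sub (card_le_card hBA)]
  have hsplit : ∑ p ∈ A \ B, ‖p - m‖ ^ 2 + ∑ p ∈ B, ‖p - m‖ ^ 2 = ∑ p ∈ A, ‖p - m‖ ^ 2 :=
    sum_sdiff hBA
  have hB : (#B : ℝ) * ‖μ - m‖ ^ 2 ≤ ∑ p ∈ B, ‖p - m‖ ^ 2 := card_mul_norm_sub_sq_le_sum hμ m
  -- The deviations from `m` over `A \ B` cancel those over `B`, which sum to `#B • (μ - m)`.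
  have hC : ∑ p ∈ A \ B, (p - m) = -((#B : ℝ) • (μ - m)) := by
    refine eq_neg_of_add_eq_zero_left ?_
    rw [← sum_sub_eq_card_smul_sub hμ, sum_sdiff hBA, sum_sub_eq_card_smul_sub hm, sub_self,
      smul_zero]
  have hCS : (#B : ℝ) ^ 2 * ‖μ - m‖ ^ 2 ≤ #(A \ B) * ∑ p ∈ A \ B, ‖p - m‖ ^ 2 := by
    have := sq_norm_sum_le_card_mul_sum_sq_norm (A \ B) (· - m)
    rwa [hC, norm_neg, norm_smul, Real.norm_natCast, mul_pow] at this
  rw [← hcard, ← hsplit]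
  have hAB : (#A : ℝ) = #B + #(A \ B) := by rw [hcard]; ring
  rw [hAB]
  nlinarith [mul_le_mul_of_nonneg_left hB (Nat.cast_nonneg (α := ℝ) #(A \ B))]

lemma sum_norm_sub_sq_le_of_card_le_mul_card_inter [DecidableEq E] {A T : Finset E} {m : E}
    {k : ℕ} (hm : (#A : ℝ) • m = ∑ p ∈ A, p) (hk : #A ≤ k * #(A ∩ T)) (x : E) :
    ∑ p ∈ A, ‖p - x‖ ^ 2 ≤
      (2 * k - 1) * ∑ p ∈ A, ‖p - m‖ ^ 2 + 2 * k * ∑ p ∈ T, ‖p - x‖ ^ 2 := by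
  set B := A ∩ T
  obtain hB | hB := B.eq_empty_or_nonempty
  · have hA : A = ∅ := card_eq_zero.1 (by simpa [hB] using hk)
    simp only [hA, sum_empty, mul_zero, zero_add]
    positivity
  set μ := (#B : ℝ)⁻¹ • ∑ p ∈ B, p
  have hb : (0 : ℝ) < #B := by exact_mod_cast hB.card_pos
  have hμ : (#B : ℝ) • μ = ∑ p ∈ B, p := card_smul_inv_card_smul_sum B
  have hk' : (#A : ℝ) ≤ k * #B := by exact_mod_cast hk
  set V := ∑ p ∈ A, ‖p - m‖ ^ 2
  have hnear : (#A : ℝ) * ‖μ - m‖ ^ 2 ≤ (k - 1) * V := by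
    refine le_of_mul_le_mul_left ?_ hb
    calc (#B : ℝ) * (#A * ‖μ - m‖ ^ 2) ≤ (#A - #B) * V :=
          card_mul_card_mul_norm_sub_sq_le inter_subset_left hm hμ
      _ ≤ (k * #B - #B) * V := by gcongr
      _ = #B * ((k - 1) * V) := by ring
  have hfar : (#A : ℝ) * ‖μ - x‖ ^ 2 ≤ k * ∑ p ∈ T, ‖p - x‖ ^ 2 :=
    calc (#A : ℝ) * ‖μ - x‖ ^ 2 ≤ k * (#B * ‖μ - x‖ ^ 2) := by rw [← mul_assoc]; gcongr
      _ ≤ k * ∑ p ∈ B, ‖p - x‖ ^ 2 := by gcongr; exact card_mul_norm_sub_sq_le_sum hμ x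
      _ ≤ k * ∑ p ∈ T, ‖p - x‖ ^ 2 := by
          gcongr
          exact inter_subset_right
  have htri := norm_sub_sq_le_two_mul_add m μ x
  rw [norm_sub_rev m μ] at htri
  rw [sum_norm_sub_sq_eq_of_card_smul_eq_sum hm x]
  linarith [mul_le_mul_of_nonneg_left htri (Nat.cast_nonneg (α := ℝ) #A)]

end Centroid

theorem stmt_18_general {d k : ℕ} [DecidableEq (EuclideanSpace ℝ (Fin d))]
    (Opt S : Fin k → Finset (EuclideanSpace ℝ (Fin d)))
    (m c : Fin k → EuclideanSpace ℝ (Fin d))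
    (hm : ∀ i, m i = ((Opt i).card : ℝ)⁻¹ • ∑ p ∈ Opt i, p)
    (capp : ℝ)
    (happrox : ∑ j, ∑ p ∈ S j, ‖p - c j‖ ^ 2 ≤
      capp * ∑ i, ∑ p ∈ Opt i, ‖p - m i‖ ^ 2)
    (ji : Fin k → Fin k)
    (hji : ∀ i, (((Opt i ∩ S (ji i)).card : ℝ)) ≥ ((Opt i).card : ℝ) / (k : ℝ)) :
    ∑ i, ∑ p ∈ Opt i, ‖p - c (ji i)‖ ^ 2 ≤
      (2 * capp * (k : ℝ) ^ 2 + 2 * (k : ℝ) - 1) *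
        ∑ i, ∑ p ∈ Opt i, ‖p - m i‖ ^ 2 := by
  rcases Nat.eq_zero_or_pos k with rfl | hk
  · simp
  have hkR : (0 : ℝ) < k := by exact_mod_cast hk
  have hcentroid i : (#(Opt i) : ℝ) • m i = ∑ p ∈ Opt i, p := by
    rw [hm i, card_smul_inv_card_smul_sum]
  have hfrac i : #(Opt i) ≤ k * #(Opt i ∩ S (ji i)) := by
    have := hji i
    rw [ge_iff_le, div_le_iff₀ hkR] at this
    exact_mod_cast this.trans_eq (mul_comm _ _)
  set OPT := ∑ i, ∑ p ∈ Opt i, ‖p - m i‖ ^ 2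
  set SOL := ∑ j, ∑ p ∈ S j, ‖p - c j‖ ^ 2
  have hcluster i : ∑ p ∈ S (ji i), ‖p - c (ji i)‖ ^ 2 ≤ SOL :=
    single_le_sum (f := fun j => ∑ p ∈ S j, ‖p - c j‖ ^ 2) (fun _ _ => by positivity) (mem_univ _)
  calc ∑ i, ∑ p ∈ Opt i, ‖p - c (ji i)‖ ^ 2
      ≤ ∑ i, ((2 * k - 1) * ∑ p ∈ Opt i, ‖p - m i‖ ^ 2 + 2 * k * SOL) := by
        gcongr with i
        exact (sum_norm_sub_sq_le_of_card_le_mul_card_inter (hcentroid i) (hfrac i) _).trans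
          (by gcongr; exact hcluster i)
    _ = (2 * k - 1) * OPT + 2 * k ^ 2 * SOL := by
        rw [sum_add_distrib, ← mul_sum, sum_const, card_univ, Fintype.card_fin, nsmul_eq_mul]
        ring
    _ ≤ (2 * capp * k ^ 2 + 2 * k - 1) * OPT := by
        linarith [mul_le_mul_of_nonneg_left happrox (by positivity : (0 : ℝ) ≤ 2 * k ^ 2)]

theorem stmt_18 {d k : ℕ} [DecidableEq (EuclideanSpace ℝ (Fin d))] (G : Finset (EuclideanSpace ℝ (Fin d)))
    (Opt S : Fin k → Finset (EuclideanSpace ℝ (Fin d)))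
    (hOptdisj : ∀ i₁ i₂, i₁ ≠ i₂ → Disjoint (Opt i₁) (Opt i₂))
    (hSdisj : ∀ j₁ j₂, j₁ ≠ j₂ → Disjoint (S j₁) (S j₂))
    (hOptU : G = Finset.univ.biUnion Opt)
    (hSU : G = Finset.univ.biUnion S)
    (hOptne : ∀ i, (Opt i).Nonempty)
    (m c : Fin k → EuclideanSpace ℝ (Fin d))
    (hm : ∀ i, m i = ((Opt i).card : ℝ)⁻¹ • ∑ p ∈ Opt i, p)
    (hc : ∀ j, c j = ((S j).card : ℝ)⁻¹ • ∑ p ∈ S j, p)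
    (capp : ℝ)
    (happrox : ∑ j, ∑ p ∈ S j, ‖p - c j‖ ^ 2 ≤
      capp * ∑ i, ∑ p ∈ Opt i, ‖p - m i‖ ^ 2)
    (ji : Fin k → Fin k)
    (hji : ∀ i, (((Opt i ∩ S (ji i)).card : ℝ)) ≥ ((Opt i).card : ℝ) / (k : ℝ)) :
    ∑ i, ∑ p ∈ Opt i, ‖p - c (ji i)‖ ^ 2 ≤
      (2 * capp * (k : ℝ) ^ 2 + 2 * (k : ℝ) - 1) *
        ∑ i, ∑ p ∈ Opt i, ‖p - m i‖ ^ 2 :=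
  stmt_18_general Opt S m c hm capp happrox ji hji
end

section
/- Let μ_opt = ∑_{j=1}^k β_j μ_j where β_j > 0, ∑β_j = 1. If points p_{v_j} satisfy ‖p_{v_j} − m_j‖ ≤ 4μ_j + (1+ε)·j·(ε/β_j)·μ_opt for each j, and Opt_j are sets of sizes β_j·N with ∑_{p∈Opt_j}‖p − m_j‖ = |Opt_j|·μ_j, then ∑_{j=1}^k ∑_{p∈Opt_j} ‖p − p_{v_j}‖ ≤ (5 + (1+ε)k²ε)·N·μ_opt. -/
open Finset

/-! Each cluster is charged its own cost plus `|Opt j|` times the displacement `‖pv j - m j‖`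
(triangle inequality through `m j`). Since `|Opt j| = β j N`, the factor `ε / β j` of the
displacement bound cancels against `β j`, leaving at most `(1 + ε) k ε N μopt` per cluster on top
of `5 β j N μ j`; summing over the `k` clusters gives the claim. -/

lemma Finset.sum_norm_sub_le_sum_norm_sub_add {E : Type*} [SeminormedAddCommGroup E]
    (s : Finset E) (a b : E) :
    ∑ p ∈ s, ‖p - b‖ ≤ ∑ p ∈ s, ‖p - a‖ + #s * ‖b - a‖ := by
  calc ∑ p ∈ s, ‖p - b‖ ≤ ∑ p ∈ s, (‖p - a‖ + ‖b - a‖) :=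
        sum_le_sum fun p _ => by
          simpa only [norm_sub_rev a b] using norm_sub_le_norm_sub_add_norm_sub p a b
    _ = ∑ p ∈ s, ‖p - a‖ + #s * ‖b - a‖ := by
        rw [sum_add_distrib, sum_const, nsmul_eq_mul]

lemma sum_norm_sub_le_of_norm_sub_le {E : Type*} [SeminormedAddCommGroup E] {s : Finset E}
    {m v : E} {β μ N c ε μopt : ℝ} (hsize : (#s : ℝ) = β * N)
    (hμ : ∑ p ∈ s, ‖p - m‖ = #s * μ) (hclose : ‖v - m‖ ≤ 4 * μ + c * (ε / β) * μopt)
    (hc : 0 ≤ c * ε * (N * μopt)) :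
    ∑ p ∈ s, ‖p - v‖ ≤ 5 * (β * μ) * N + c * ε * (N * μopt) := by
  have hβN : 0 ≤ β * N := hsize ▸ Nat.cast_nonneg _
  calc ∑ p ∈ s, ‖p - v‖ ≤ ∑ p ∈ s, ‖p - m‖ + #s * ‖v - m‖ :=
        s.sum_norm_sub_le_sum_norm_sub_add m v
    _ = β * N * (μ + ‖v - m‖) := by rw [hμ, hsize]; ring
    _ ≤ β * N * (μ + (4 * μ + c * (ε / β) * μopt)) := by gcongr
    -- `β` may be `0` (and then `ε / β = 0`), hence `β / β ≤ 1` rather than `= 1`.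
    _ = 5 * (β * μ) * N + c * ε * (N * μopt) * (β / β) := by ring
    _ ≤ 5 * (β * μ) * N + c * ε * (N * μopt) :=
        add_le_add_right (mul_le_of_le_one_right hc (div_self_le_one β)) _

lemma Fin.sum_val_add_one_le_sq (k : ℕ) : ∑ j : Fin k, ((j : ℕ) + 1 : ℝ) ≤ (k : ℝ) ^ 2 := by
  calc ∑ j : Fin k, ((j : ℕ) + 1 : ℝ) ≤ ∑ _j : Fin k, (k : ℝ) :=
        sum_le_sum fun j _ => by exact_mod_cast j.isLt
    _ = (k : ℝ) ^ 2 := by simp [sq]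

theorem stmt_19_general {d k : ℕ} (Opt : Fin k → Finset (EuclideanSpace ℝ (Fin d)))
    (β μ : Fin k → ℝ)
    (N : ℕ)
    (hsize : ∀ j, ((Opt j).card : ℝ) = β j * (N : ℝ))
    (m pv : Fin k → EuclideanSpace ℝ (Fin d))
    (hμ : ∀ j, ∑ p ∈ Opt j, ‖p - m j‖ = ((Opt j).card : ℝ) * μ j)
    (ε : ℝ) (hε : 0 < ε)
    (μopt : ℝ) (hμopt : μopt = ∑ j, β j * μ j)
    (hclose : ∀ j : Fin k,
      ‖pv j - m j‖ ≤ 4 * μ j + (1 + ε) * ((j : ℕ) + 1) * (ε / β j) * μopt) :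
    ∑ j, ∑ p ∈ Opt j, ‖p - pv j‖ ≤
      (5 + (1 + ε) * (k : ℝ) ^ 2 * ε) * (N : ℝ) * μopt := by
  have hNμopt : 0 ≤ N * μopt := by
    have : N * μopt = ∑ j, ∑ p ∈ Opt j, ‖p - m j‖ := by
      simp only [hμopt, hμ, hsize, mul_sum]
      exact sum_congr rfl fun j _ => by ring
    exact this ▸ sum_nonneg fun j _ => sum_nonneg fun p _ => norm_nonneg _
  calc ∑ j, ∑ p ∈ Opt j, ‖p - pv j‖
        ≤ ∑ j, (5 * (β j * μ j) * N + ((j : ℕ) + 1) * ((1 + ε) * ε * (N * μopt))) :=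
        sum_le_sum fun j _ =>
          (sum_norm_sub_le_of_norm_sub_le (hsize j) (hμ j) (hclose j) (by positivity)).trans_eq
            (by ring)
    _ = 5 * μopt * N + (∑ j : Fin k, ((j : ℕ) + 1 : ℝ)) * ((1 + ε) * ε * (N * μopt)) := by
        rw [sum_add_distrib, ← sum_mul, ← sum_mul, ← mul_sum, hμopt]
    _ ≤ 5 * μopt * N + (k : ℝ) ^ 2 * ((1 + ε) * ε * (N * μopt)) := by
        gcongr; exact Fin.sum_val_add_one_le_sq k
    _ = (5 + (1 + ε) * (k : ℝ) ^ 2 * ε) * (N : ℝ) * μopt := by ring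

theorem stmt_19 {d k : ℕ} (Opt : Fin k → Finset (EuclideanSpace ℝ (Fin d)))
    (hdisj : ∀ j₁ j₂, j₁ ≠ j₂ → Disjoint (Opt j₁) (Opt j₂))
    (β μ : Fin k → ℝ) (hβpos : ∀ j, 0 < β j) (hβsum : ∑ j, β j = 1)
    (N : ℕ) (hN : N = ∑ j, (Opt j).card)
    (hsize : ∀ j, ((Opt j).card : ℝ) = β j * (N : ℝ))
    (m pv : Fin k → EuclideanSpace ℝ (Fin d))
    (hμ : ∀ j, ∑ p ∈ Opt j, ‖p - m j‖ = ((Opt j).card : ℝ) * μ j)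
    (ε : ℝ) (hε : 0 < ε)
    (μopt : ℝ) (hμopt : μopt = ∑ j, β j * μ j)
    (hclose : ∀ j : Fin k,
      ‖pv j - m j‖ ≤ 4 * μ j + (1 + ε) * ((j : ℕ) + 1) * (ε / β j) * μopt) :
    ∑ j, ∑ p ∈ Opt j, ‖p - pv j‖ ≤
      (5 + (1 + ε) * (k : ℝ) ^ 2 * ε) * (N : ℝ) * μopt :=
  stmt_19_general Opt β μ N hsize m pv hμ ε hε μopt hμopt hclose
end
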